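/- If I, J are disjoint 3-subsets of {1,…,10}, then the reflections κ_I and κ_J satisfy the braid relation κ_I κ_J κ_I = κ_J κ_I κ_J. -/

import Mathlib

/-!
The roots `α_I`, `α_J` have Lorentzian norm `1 - 3 = -2` and, as `I ∩ J = ∅`, pairing `1`.
For any bilinear form `B` and vectors `a`, `b` with these Gram entries, the maps
`bilinReflection B a` and `bilinReflection B b` satisfy the braid relation by a direct expansion:
this is the `A₂` Cartan matrix.
-/

/-- The standard basis vectors of ℝ^{1,10}. -/
noncomputable def e (i : Fin 11) : Fin 11 → ℝ := fun j => if j = i then 1 else 0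

/-- The Lorentzian bilinear form x·y = x₀y₀ − ∑_{k=1}^{10} x_k y_k on ℝ^{1,10}. -/
noncomputable def lor (x y : Fin 11 → ℝ) : ℝ :=
  x 0 * y 0 - ∑ k : Fin 10, x k.succ * y k.succ

/-- For a 3-subset I ⊆ {1,…,10}, the root α_I = e₀ − ∑_{t ∈ I} e t. -/
noncomputable def alphaI (I : Finset (Fin 11)) : Fin 11 → ℝ :=
  e 0 - ∑ t ∈ I, e t

/-- The reflection κ_I(x) = x + (x·α_I) α_I. -/
noncomputable def kappa (I : Finset (Fin 11)) (x : Fin 11 → ℝ) : Fin 11 → ℝ :=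
  x + lor x (alphaI I) • alphaI I

open Finset

section

variable {R M : Type*} [CommRing R] [AddCommGroup M] [Module R M]

def bilinReflection (B : LinearMap.BilinForm R M) (a x : M) : M :=
  x + B x a • a

theorem bilinReflection_braid (B : LinearMap.BilinForm R M) {a b : M}
    (ha : B a a = -2) (hb : B b b = -2) (hab : B a b = 1) (hba : B b a = 1) (x : M) :
    bilinReflection B a (bilinReflection B b (bilinReflection B a x)) =
      bilinReflection B b (bilinReflection B a (bilinReflection B b x)) := by
  simp only [bilinReflection, map_add, map_smul, LinearMap.add_apply, LinearMap.smul_apply,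
    smul_eq_mul, ha, hb, hab, hba]
  module

end

noncomputable def lorForm : LinearMap.BilinForm ℝ (Fin 11 → ℝ) :=
  LinearMap.mk₂ ℝ lor
    (fun x y z => by simp only [lor, Pi.add_apply, add_mul, sum_add_distrib]; ring)
    (fun c x y => by simp only [lor, Pi.smul_apply, smul_eq_mul, mul_sub, mul_sum, mul_assoc])
    (fun x y z => by simp only [lor, Pi.add_apply, mul_add, sum_add_distrib]; ring)
    (fun c x y => by simp only [lor, Pi.smul_apply, smul_eq_mul, mul_sub, mul_sum, mul_left_comm])

theorem kappa_eq_bilinReflection (I : Finset (Fin 11)) :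
    kappa I = bilinReflection lorForm (alphaI I) := rfl

theorem alphaI_apply (I : Finset (Fin 11)) (j : Fin 11) :
    alphaI I j = (if j = 0 then 1 else 0) - (if j ∈ I then 1 else 0) := by
  simp [alphaI, e, Finset.sum_apply, Finset.sum_ite_eq]

theorem lor_alphaI_alphaI {I J : Finset (Fin 11)} (hI : 0 ∉ I) (hJ : 0 ∉ J) :
    lor (alphaI I) (alphaI J) = 1 - #(I ∩ J) := by
  have hsucc : ∀ k : Fin 10, alphaI I k.succ * alphaI J k.succ
      = if k.succ ∈ I ∩ J then 1 else 0 := by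
    intro k
    simp only [alphaI_apply, Fin.succ_ne_zero, if_false, mem_inter]
    split_ifs <;> simp_all
  have hsum : ∑ k : Fin 10, alphaI I k.succ * alphaI J k.succ = #(I ∩ J) := by
    have hsum_univ := Fin.sum_univ_succ fun j => if j ∈ I ∩ J then (1 : ℝ) else 0
    rw [if_neg (by simp [hI]), zero_add] at hsum_univ
    simp only [hsucc, ← hsum_univ, sum_boole, filter_mem_eq_inter, univ_inter]
  have hzero : ∀ K : Finset (Fin 11), 0 ∉ K → alphaI K 0 = 1 :=
    fun K hK => by simp [alphaI_apply, hK]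
  rw [lor, hsum, hzero I hI, hzero J hJ, one_mul]

theorem lor_alphaI_self {I : Finset (Fin 11)} (hI : #I = 3) (h0 : 0 ∉ I) :
    lor (alphaI I) (alphaI I) = -2 := by
  rw [lor_alphaI_alphaI h0 h0, inter_self, hI]
  norm_num

theorem lor_alphaI_of_disjoint {I J : Finset (Fin 11)} (hI : 0 ∉ I) (hJ : 0 ∉ J)
    (h : Disjoint I J) : lor (alphaI I) (alphaI J) = 1 := by
  simp [lor_alphaI_alphaI hI hJ, disjoint_iff_inter_eq_empty.mp h]

theorem kappa_disjoint_braid (I J : Finset (Fin 11))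
    (hI : I.card = 3) (hJ : J.card = 3)
    (h0I : (0 : Fin 11) ∉ I) (h0J : (0 : Fin 11) ∉ J)
    (hIJ : Disjoint I J) :
    ∀ x, kappa I (kappa J (kappa I x)) = kappa J (kappa I (kappa J x)) := by
  simp only [kappa_eq_bilinReflection]
  exact bilinReflection_braid lorForm (lor_alphaI_self hI h0I) (lor_alphaI_self hJ h0J)
    (lor_alphaI_of_disjoint h0I h0J hIJ) (lor_alphaI_of_disjoint h0J h0I hIJ.symm)
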